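/- Let (U₁, U₂) have a nondegenerate bivariate normal distribution with means μ₁, μ₂, standard deviations σ₁, σ₂ > 0, correlation ρ ∈ (−1, 1), and covariance σ₁₂ = ρσ₁σ₂. Then for all integers k ≥ 1 and m ≥ 1: k·(σ₁²σ₂² − σ₁₂²)·E[U₁^{k-1}U₂^m·1{U₁>0, U₂>0}] = E[(σ₂²·U₁^{k+1}U₂^m − σ₁₂·U₁^k U₂^{m+1} − (σ₂²μ₁ − σ₁₂μ₂)·U₁^k U₂^m)·1{U₁>0, U₂>0}]. -/

import Mathlib

/-!
For fixed `u₂` the density is `C · exp (-(a u₁² + b u₁))` with `a > 0`, and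
`(σ₁²σ₂² − σ₁₂²)(2a u₁ + b)` is exactly the linear factor `σ₂² u₁ − σ₁₂ u₂ − (σ₂² μ₁ − σ₁₂ μ₂)`.
Since `(2a u₁ + b) exp (-(a u₁² + b u₁))` is minus the derivative of `exp (-(a u₁² + b u₁))`,
integrating it against `u₁ᵏ` by parts over `(0, ∞)` gives `k ∫ u₁ᵏ⁻¹ exp (-(a u₁² + b u₁))`: the
boundary term vanishes at `0` because `k ≥ 1` and at `∞` by Gaussian decay. Fubini reduces the
double integrals to these inner integrals; it applies because the density is dominated by a
product of two one-dimensional Gaussians, so all polynomial moments are integrable.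
-/

open MeasureTheory

/-- Density of the nondegenerate bivariate normal distribution with means `μ₁, μ₂`,
standard deviations `σ₁, σ₂ > 0` and correlation `ρ ∈ (−1, 1)`. -/
noncomputable def binormalPDF (μ₁ μ₂ σ₁ σ₂ ρ u₁ u₂ : ℝ) : ℝ :=
  (1 / (2 * Real.pi * σ₁ * σ₂ * Real.sqrt (1 - ρ ^ 2))) *
    Real.exp (-(1 / (2 * (1 - ρ ^ 2))) *
      ((u₁ - μ₁) ^ 2 / σ₁ ^ 2 - 2 * ρ * (u₁ - μ₁) * (u₂ - μ₂) / (σ₁ * σ₂)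
        + (u₂ - μ₂) ^ 2 / σ₂ ^ 2))

open Real Set Filter Topology

section ExpNegQuadratic

variable {a : ℝ}

lemma exp_neg_quadratic_le (ha : 0 < a) (b c x : ℝ) :
    exp (-(a * x ^ 2 + b * x + c)) ≤ exp (b ^ 2 / (2 * a) - c) * exp (-(a / 2) * x ^ 2) := by
  rw [← exp_add, exp_le_exp]
  have hsq : 0 ≤ a / 2 * (x + b / a) ^ 2 := by positivity
  have hexp : a / 2 * (x + b / a) ^ 2 = a / 2 * x ^ 2 + b * x + b ^ 2 / (2 * a) := by
    field_simp
    ring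
  linarith

lemma integrable_pow_mul_exp_neg_quadratic (ha : 0 < a) (b c : ℝ) (n : ℕ) :
    Integrable fun x : ℝ => x ^ n * exp (-(a * x ^ 2 + b * x + c)) := by
  have hdom : Integrable fun x : ℝ =>
      exp (b ^ 2 / (2 * a) - c) * ‖x ^ n * exp (-(a / 2) * x ^ 2)‖ := by
    have h := integrable_rpow_mul_exp_neg_mul_sq (half_pos ha) (s := n)
      (by linarith [(n.cast_nonneg : (0 : ℝ) ≤ n)])
    simp only [rpow_natCast] at h
    exact h.norm.const_mul _
  refine hdom.mono' (by fun_prop) (.of_forall fun x => ?_)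
  rw [norm_mul, norm_mul, norm_of_nonneg (exp_pos _).le, norm_of_nonneg (exp_pos _).le,
    mul_left_comm]
  gcongr
  exact exp_neg_quadratic_le ha b c x

lemma tendsto_pow_mul_exp_neg_quadratic_atTop (ha : 0 < a) (b : ℝ) (n : ℕ) :
    Tendsto (fun x : ℝ => x ^ n * exp (-(a * x ^ 2 + b * x))) atTop (𝓝 0) := by
  refine squeeze_zero' ?_ ?_ (tendsto_pow_mul_exp_neg_atTop_nhds_zero n)
  · filter_upwards [eventually_ge_atTop 0] with x hx
    positivity
  · filter_upwards [eventually_ge_atTop (max 0 ((1 - b) / a))] with x hx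
    have hx₀ : 0 ≤ x := (le_max_left _ _).trans hx
    have hxb : 1 - b ≤ a * x := by
      rw [← div_le_iff₀' ha]
      exact (le_max_right _ _).trans hx
    gcongr
    nlinarith

lemma integral_Ioi_linear_mul_pow_succ_mul_exp_neg_quadratic (ha : 0 < a) (b : ℝ) (j : ℕ) :
    ∫ x in Ioi 0, (2 * a * x + b) * x ^ (j + 1) * exp (-(a * x ^ 2 + b * x))
      = (j + 1) * ∫ x in Ioi 0, x ^ j * exp (-(a * x ^ 2 + b * x)) := by
  have hint : ∀ n : ℕ, Integrable fun x : ℝ => x ^ n * exp (-(a * x ^ 2 + b * x)) := by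
    simpa using integrable_pow_mul_exp_neg_quadratic ha b 0
  have hlin : Integrable fun x : ℝ => (2 * a * x + b) * x ^ (j + 1) * exp (-(a * x ^ 2 + b * x)) :=
    (((hint (j + 2)).const_mul (2 * a)).add ((hint (j + 1)).const_mul b)).congr
      (.of_forall fun x => by simp only [Pi.add_apply]; ring)
  have hderiv : ∀ x : ℝ, HasDerivAt (fun x => x ^ (j + 1) * exp (-(a * x ^ 2 + b * x)))
      ((j + 1) * x ^ j * exp (-(a * x ^ 2 + b * x))
        - (2 * a * x + b) * x ^ (j + 1) * exp (-(a * x ^ 2 + b * x))) x := by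
    intro x
    have hquad : HasDerivAt (fun x : ℝ => -(a * x ^ 2 + b * x)) (-(2 * a * x + b)) x := by
      exact (((hasDerivAt_pow 2 x).const_mul a).add ((hasDerivAt_id x).const_mul b)).neg.congr_deriv
        (by norm_num; ring)
    exact ((hasDerivAt_pow (j + 1) x).mul hquad.exp).congr_deriv
      (by simp only [Nat.add_sub_cancel, Nat.cast_add, Nat.cast_one]; ring)
  have hpow : Integrable fun x : ℝ => (j + 1) * x ^ j * exp (-(a * x ^ 2 + b * x)) :=
    ((hint j).const_mul (j + 1)).congr (.of_forall fun x => by ring)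
  have hftc : ∫ x in Ioi (0 : ℝ), ((j + 1) * x ^ j * exp (-(a * x ^ 2 + b * x))
        - (2 * a * x + b) * x ^ (j + 1) * exp (-(a * x ^ 2 + b * x)))
      = 0 - 0 ^ (j + 1) * exp (-(a * 0 ^ 2 + b * 0)) :=
    integral_Ioi_of_hasDerivAt_of_tendsto' (fun x _ => hderiv x) (hpow.sub hlin).integrableOn
      (tendsto_pow_mul_exp_neg_quadratic_atTop ha b (j + 1))
  rw [integral_sub hpow.integrableOn hlin.integrableOn, zero_pow j.succ_ne_zero, zero_mul,
    sub_zero, sub_eq_zero] at hftc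
  rw [← hftc, ← integral_const_mul]
  simp only [mul_assoc]

end ExpNegQuadratic

theorem setIntegral_prod_symm {α β E : Type*} [MeasurableSpace α] [MeasurableSpace β]
    [NormedAddCommGroup E] [NormedSpace ℝ E] {μ : Measure α} {ν : Measure β}
    [SFinite μ] [SFinite ν] (f : α × β → E) {s : Set α} {t : Set β}
    (hf : IntegrableOn f (s ×ˢ t) (μ.prod ν)) :
    ∫ z in s ×ˢ t, f z ∂μ.prod ν = ∫ y in t, ∫ x in s, f (x, y) ∂μ ∂ν := by
  rw [IntegrableOn, ← Measure.prod_restrict] at hf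
  rw [← Measure.prod_restrict, integral_prod_symm f hf]

lemma sq_add_sq_div_four_le {ρ : ℝ} (hρ : ρ ∈ Ioo (-1 : ℝ) 1) (s t : ℝ) :
    (s ^ 2 + t ^ 2) / 4 ≤ (s ^ 2 - 2 * ρ * s * t + t ^ 2) / (2 * (1 - ρ ^ 2)) := by
  have hρ₂ : 0 < 1 - ρ ^ 2 := by nlinarith [hρ.1, hρ.2]
  rw [le_div_iff₀ (by positivity)]
  -- `(s² - 2ρst + t²) - (1 - ρ²)(s² + t²) / 2 = ((s - ρt)² + (t - ρs)²) / 2`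
  nlinarith [sq_nonneg (s - ρ * t), sq_nonneg (t - ρ * s)]

section Binormal

variable {μ₁ μ₂ σ₁ σ₂ ρ : ℝ}

lemma binormalPDF_nonneg (hσ₁ : 0 < σ₁) (hσ₂ : 0 < σ₂) (u v : ℝ) :
    0 ≤ binormalPDF μ₁ μ₂ σ₁ σ₂ ρ u v := by
  unfold binormalPDF
  positivity

lemma binormalPDF_le (hσ₁ : 0 < σ₁) (hσ₂ : 0 < σ₂) (hρ : ρ ∈ Ioo (-1 : ℝ) 1) (u v : ℝ) :
    binormalPDF μ₁ μ₂ σ₁ σ₂ ρ u v ≤ 1 / (2 * π * σ₁ * σ₂ * √(1 - ρ ^ 2)) *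
      (exp (-((u - μ₁) / σ₁) ^ 2 / 4) * exp (-((v - μ₂) / σ₂) ^ 2 / 4)) := by
  unfold binormalPDF
  gcongr
  rw [← exp_add, exp_le_exp]
  have hQ : (u - μ₁) ^ 2 / σ₁ ^ 2 - 2 * ρ * (u - μ₁) * (v - μ₂) / (σ₁ * σ₂) + (v - μ₂) ^ 2 / σ₂ ^ 2
      = ((u - μ₁) / σ₁) ^ 2 - 2 * ρ * ((u - μ₁) / σ₁) * ((v - μ₂) / σ₂) + ((v - μ₂) / σ₂) ^ 2 := by
    ring
  rw [hQ, neg_mul, one_div_mul_eq_div]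
  linarith [sq_add_sq_div_four_le hρ ((u - μ₁) / σ₁) ((v - μ₂) / σ₂)]

lemma integrable_pow_mul_exp_neg_sq_div_four {σ : ℝ} (hσ : σ ≠ 0) (μ : ℝ) (n : ℕ) :
    Integrable fun u : ℝ => u ^ n * exp (-((u - μ) / σ) ^ 2 / 4) := by
  convert integrable_pow_mul_exp_neg_quadratic (a := 1 / (4 * σ ^ 2)) (by positivity)
    (-μ / (2 * σ ^ 2)) (μ ^ 2 / (4 * σ ^ 2)) n using 4 with u
  field_simp
  ring

lemma integrable_pow_mul_pow_mul_binormalPDF (hσ₁ : 0 < σ₁) (hσ₂ : 0 < σ₂)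
    (hρ : ρ ∈ Ioo (-1 : ℝ) 1) (n m : ℕ) :
    Integrable fun p : ℝ × ℝ => p.1 ^ n * p.2 ^ m * binormalPDF μ₁ μ₂ σ₁ σ₂ ρ p.1 p.2 := by
  set K := 1 / (2 * π * σ₁ * σ₂ * √(1 - ρ ^ 2))
  have hdom : Integrable fun p : ℝ × ℝ =>
      K * ‖p.1 ^ n * exp (-((p.1 - μ₁) / σ₁) ^ 2 / 4)‖
        * ‖p.2 ^ m * exp (-((p.2 - μ₂) / σ₂) ^ 2 / 4)‖ := by
    rw [Measure.volume_eq_prod]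
    exact ((integrable_pow_mul_exp_neg_sq_div_four hσ₁.ne' μ₁ n).norm.const_mul K).mul_prod
      (integrable_pow_mul_exp_neg_sq_div_four hσ₂.ne' μ₂ m).norm
  refine hdom.mono' (by unfold binormalPDF; fun_prop) (.of_forall fun p => ?_)
  rw [norm_mul, norm_mul, norm_of_nonneg (binormalPDF_nonneg hσ₁ hσ₂ _ _)]
  calc ‖p.1 ^ n‖ * ‖p.2 ^ m‖ * binormalPDF μ₁ μ₂ σ₁ σ₂ ρ p.1 p.2
      ≤ ‖p.1 ^ n‖ * ‖p.2 ^ m‖ * (K * (exp (-((p.1 - μ₁) / σ₁) ^ 2 / 4)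
          * exp (-((p.2 - μ₂) / σ₂) ^ 2 / 4))) := by
        gcongr
        exact binormalPDF_le hσ₁ hσ₂ hρ _ _
    _ = _ := by
        simp only [norm_mul, norm_of_nonneg (exp_pos _).le]
        ring

lemma binormalPDF_eq_mul_exp_neg_quadratic (hσ₁ : σ₁ ≠ 0) (hσ₂ : σ₂ ≠ 0)
    (hρ : ρ ∈ Ioo (-1 : ℝ) 1) (y : ℝ) :
    ∃ a > 0, ∃ b C : ℝ, (∀ x, binormalPDF μ₁ μ₂ σ₁ σ₂ ρ x y = C * exp (-(a * x ^ 2 + b * x))) ∧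
      ∀ x, (σ₁ ^ 2 * σ₂ ^ 2 - (ρ * σ₁ * σ₂) ^ 2) * (2 * a * x + b)
        = σ₂ ^ 2 * x - ρ * σ₁ * σ₂ * y - (σ₂ ^ 2 * μ₁ - ρ * σ₁ * σ₂ * μ₂) := by
  have hρ₂ : 0 < 1 - ρ ^ 2 := by nlinarith [hρ.1, hρ.2]
  refine ⟨1 / (2 * (1 - ρ ^ 2) * σ₁ ^ 2), by positivity,
    -((μ₁ / σ₁ ^ 2 + ρ * (y - μ₂) / (σ₁ * σ₂)) / (1 - ρ ^ 2)),
    1 / (2 * π * σ₁ * σ₂ * √(1 - ρ ^ 2)) * exp (-((μ₁ ^ 2 / σ₁ ^ 2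
      + 2 * ρ * μ₁ * (y - μ₂) / (σ₁ * σ₂) + (y - μ₂) ^ 2 / σ₂ ^ 2) / (2 * (1 - ρ ^ 2)))),
    fun x => ?_, fun x => ?_⟩
  · rw [binormalPDF, mul_assoc (1 / _), ← exp_add]
    congr 2
    field_simp
    ring
  · field_simp
    ring

theorem integral_Ioi_mul_pow_mul_binormalPDF (hσ₁ : σ₁ ≠ 0) (hσ₂ : σ₂ ≠ 0)
    (hρ : ρ ∈ Ioo (-1 : ℝ) 1) (y : ℝ) {k : ℕ} (hk : 1 ≤ k) :
    ∫ x in Ioi 0, (σ₂ ^ 2 * x - ρ * σ₁ * σ₂ * y - (σ₂ ^ 2 * μ₁ - ρ * σ₁ * σ₂ * μ₂)) * x ^ k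
        * binormalPDF μ₁ μ₂ σ₁ σ₂ ρ x y
      = k * (σ₁ ^ 2 * σ₂ ^ 2 - (ρ * σ₁ * σ₂) ^ 2)
          * ∫ x in Ioi 0, x ^ (k - 1) * binormalPDF μ₁ μ₂ σ₁ σ₂ ρ x y := by
  obtain ⟨j, rfl⟩ := Nat.exists_eq_add_of_le' hk
  obtain ⟨a, ha, b, C, hpdf, hlin⟩ :=
    binormalPDF_eq_mul_exp_neg_quadratic (μ₁ := μ₁) (μ₂ := μ₂) hσ₁ hσ₂ hρ y
  have hL : ∀ x, (σ₁ ^ 2 * σ₂ ^ 2 - (ρ * σ₁ * σ₂) ^ 2) * (2 * a * x + b) * x ^ (j + 1)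
      * (C * exp (-(a * x ^ 2 + b * x))) = (σ₁ ^ 2 * σ₂ ^ 2 - (ρ * σ₁ * σ₂) ^ 2) * C
        * ((2 * a * x + b) * x ^ (j + 1) * exp (-(a * x ^ 2 + b * x))) := fun x => by ring
  have hR : ∀ x, x ^ j * (C * exp (-(a * x ^ 2 + b * x)))
      = C * (x ^ j * exp (-(a * x ^ 2 + b * x))) := fun x => by ring
  simp only [hpdf, ← hlin, Nat.add_sub_cancel, hL, hR, integral_const_mul,
    integral_Ioi_linear_mul_pow_succ_mul_exp_neg_quadratic ha]
  push_cast
  ring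

end Binormal

theorem prop1_1_first_key_equation_general (μ₁ μ₂ σ₁ σ₂ ρ : ℝ) (hσ₁ : 0 < σ₁) (hσ₂ : 0 < σ₂)
    (hρ : ρ ∈ Set.Ioo (-1 : ℝ) 1) (σ₁₂ : ℝ) (hσ₁₂ : σ₁₂ = ρ * σ₁ * σ₂)
    (k m : ℕ) (hk : 1 ≤ k) :
    (k : ℝ) * (σ₁ ^ 2 * σ₂ ^ 2 - σ₁₂ ^ 2) *
        ∫ p in Set.Ioi (0 : ℝ) ×ˢ Set.Ioi (0 : ℝ),
          p.1 ^ (k - 1) * p.2 ^ m * binormalPDF μ₁ μ₂ σ₁ σ₂ ρ p.1 p.2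
      = ∫ p in Set.Ioi (0 : ℝ) ×ˢ Set.Ioi (0 : ℝ),
          (σ₂ ^ 2 * (p.1 ^ (k + 1) * p.2 ^ m) - σ₁₂ * (p.1 ^ k * p.2 ^ (m + 1))
            - (σ₂ ^ 2 * μ₁ - σ₁₂ * μ₂) * (p.1 ^ k * p.2 ^ m))
            * binormalPDF μ₁ μ₂ σ₁ σ₂ ρ p.1 p.2 := by
  subst hσ₁₂
  have hmoment := integrable_pow_mul_pow_mul_binormalPDF (μ₁ := μ₁) (μ₂ := μ₂) hσ₁ hσ₂ hρ
  have hrhs : Integrable fun p : ℝ × ℝ =>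
      (σ₂ ^ 2 * (p.1 ^ (k + 1) * p.2 ^ m) - ρ * σ₁ * σ₂ * (p.1 ^ k * p.2 ^ (m + 1))
        - (σ₂ ^ 2 * μ₁ - ρ * σ₁ * σ₂ * μ₂) * (p.1 ^ k * p.2 ^ m))
        * binormalPDF μ₁ μ₂ σ₁ σ₂ ρ p.1 p.2 :=
    ((((hmoment (k + 1) m).const_mul (σ₂ ^ 2)).sub
      ((hmoment k (m + 1)).const_mul (ρ * σ₁ * σ₂))).sub
      ((hmoment k m).const_mul (σ₂ ^ 2 * μ₁ - ρ * σ₁ * σ₂ * μ₂))).congr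
      (.of_forall fun p => by simp only [Pi.sub_apply]; ring)
  rw [Measure.volume_eq_prod, setIntegral_prod_symm _ (hmoment _ _).integrableOn,
    setIntegral_prod_symm _ hrhs.integrableOn, ← integral_const_mul]
  refine integral_congr_ae (.of_forall fun y => ?_)
  calc (k : ℝ) * (σ₁ ^ 2 * σ₂ ^ 2 - (ρ * σ₁ * σ₂) ^ 2)
        * ∫ x in Ioi 0, x ^ (k - 1) * y ^ m * binormalPDF μ₁ μ₂ σ₁ σ₂ ρ x y
      = y ^ m * (k * (σ₁ ^ 2 * σ₂ ^ 2 - (ρ * σ₁ * σ₂) ^ 2)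
        * ∫ x in Ioi 0, x ^ (k - 1) * binormalPDF μ₁ μ₂ σ₁ σ₂ ρ x y) := by
        simp only [mul_right_comm _ (y ^ m), integral_mul_const]
        ring
    _ = _ := by
        rw [← integral_Ioi_mul_pow_mul_binormalPDF hσ₁.ne' hσ₂.ne' hρ y hk, ← integral_const_mul]
        congr with x
        ring

/-- First key equation in the proof of Proposition 1.1 (integration by parts in `u₁`):
`k·(σ₁²σ₂² − σ₁₂²)·E[U₁^{k-1}U₂^m·1{U₁>0,U₂>0}]
  = E[(σ₂²·U₁^{k+1}U₂^m − σ₁₂·U₁^k U₂^{m+1} − (σ₂²μ₁ − σ₁₂μ₂)·U₁^k U₂^m)·1{U₁>0,U₂>0}]`. -/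
theorem prop1_1_first_key_equation (μ₁ μ₂ σ₁ σ₂ ρ : ℝ) (hσ₁ : 0 < σ₁) (hσ₂ : 0 < σ₂)
    (hρ : ρ ∈ Set.Ioo (-1 : ℝ) 1) (σ₁₂ : ℝ) (hσ₁₂ : σ₁₂ = ρ * σ₁ * σ₂)
    (k m : ℕ) (hk : 1 ≤ k) (hm : 1 ≤ m) :
    (k : ℝ) * (σ₁ ^ 2 * σ₂ ^ 2 - σ₁₂ ^ 2) *
        ∫ p in Set.Ioi (0 : ℝ) ×ˢ Set.Ioi (0 : ℝ),
          p.1 ^ (k - 1) * p.2 ^ m * binormalPDF μ₁ μ₂ σ₁ σ₂ ρ p.1 p.2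
      = ∫ p in Set.Ioi (0 : ℝ) ×ˢ Set.Ioi (0 : ℝ),
          (σ₂ ^ 2 * (p.1 ^ (k + 1) * p.2 ^ m) - σ₁₂ * (p.1 ^ k * p.2 ^ (m + 1))
            - (σ₂ ^ 2 * μ₁ - σ₁₂ * μ₂) * (p.1 ^ k * p.2 ^ m))
            * binormalPDF μ₁ μ₂ σ₁ σ₂ ρ p.1 p.2 :=
  prop1_1_first_key_equation_general μ₁ μ₂ σ₁ σ₂ ρ hσ₁ hσ₂ hρ σ₁₂ hσ₁₂ k m hk
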